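/- Let φ be a trace preserving, Hermiticity preserving linear map on M_d(ℂ), so that its Choi matrix C_φ is Hermitian with real spectrum. Then the smallest eigenvalue of C_φ satisfies λ_min(C_φ) ≥ (1/d)·[1 − √((d²−1)·(Σ_{i,j=1}^{d} ‖φ(E_{ij})‖²_HS − 1))]. -/

import Mathlib

open Matrix Set Filter
open scoped ComplexConjugate ComplexOrder

/-- Square complex matrices of size `d`. -/
abbrev Mat (d : ℕ) := Matrix (Fin d) (Fin d) ℂ

/-- Linear maps on `M_d(ℂ)`. -/
abbrev MatMap (d : ℕ) := Mat d →ₗ[ℂ] Mat d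

/-- The Choi matrix `C_φ = Σ_{i,j} E_{ij} ⊗ φ(E_{ij})` of a linear map `φ` on `M_d(ℂ)`. -/
noncomputable def choiMatrix {d : ℕ} (φ : MatMap d) :
    Matrix (Fin d × Fin d) (Fin d × Fin d) ℂ :=
  Matrix.of fun p q => φ (Matrix.single p.1 q.1 1) p.2 q.2

/-- A map is completely positive iff its Choi matrix is positive semidefinite. -/
def IsCP {d : ℕ} (φ : MatMap d) : Prop := (choiMatrix φ).PosSemidef

/-- Trace preserving linear map. -/
def IsTP {d : ℕ} (φ : MatMap d) : Prop := ∀ a : Mat d, (φ a).trace = a.trace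

/-- Hermiticity preserving linear map. -/
def IsHP {d : ℕ} (φ : MatMap d) : Prop := ∀ a : Mat d, φ aᴴ = (φ a)ᴴ

/-- The transposition map `θ : a ↦ aᵀ` as a linear map on `M_d(ℂ)`. -/
def transposeMap (d : ℕ) : MatMap d where
  toFun a := aᵀ
  map_add' a b := by ext i j; simp
  map_smul' c a := by ext i j; simp

/-- A map is decomposable if it is a sum of a CP map and `θ` composed with a CP map. -/
def IsDecomposable {d : ℕ} (φ : MatMap d) : Prop :=
  ∃ ψ₁ ψ₂ : MatMap d, IsCP ψ₁ ∧ IsCP ψ₂ ∧ φ = ψ₁ + transposeMap d ∘ₗ ψ₂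
/-- The Hermitian Hilbert–Schmidt orthonormal basis `{F_i}` of `M_d(ℂ)` from the paper:
Hermitian, orthonormal, traceless except the last element `F_{d²} = I/√d`, ordered with
symmetric off-diagonal matrices first, then antisymmetric ones, then diagonal ones. -/
def IsOrderedHermBasis (d : ℕ) (F : Fin (d ^ 2) → Mat d) : Prop :=
  (∀ i, (F i).IsHermitian) ∧
  (∀ i j, (F i * F j).trace = if i = j then 1 else 0) ∧
  (∀ i : Fin (d ^ 2), (i : ℕ) + 1 < d ^ 2 → (F i).trace = 0) ∧
  (∀ i : Fin (d ^ 2), (i : ℕ) + 1 = d ^ 2 →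
    F i = ((Real.sqrt d : ℂ))⁻¹ • (1 : Mat d)) ∧
  (∀ i : Fin (d ^ 2), (i : ℕ) < d * (d - 1) / 2 → (F i)ᵀ = F i) ∧
  (∀ i : Fin (d ^ 2), d * (d - 1) / 2 ≤ (i : ℕ) → (i : ℕ) < d * (d - 1) → (F i)ᵀ = -(F i)) ∧
  (∀ i : Fin (d ^ 2), d * (d - 1) ≤ (i : ℕ) → ∀ j k : Fin d, j ≠ k → F i j k = 0)

/-- The signs `θ_i`: `-1` on the antisymmetric block, `+1` otherwise. -/
def thetaCoef (d : ℕ) (i : Fin (d ^ 2)) : ℂ :=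
  if d * (d - 1) / 2 ≤ (i : ℕ) ∧ (i : ℕ) < d * (d - 1) then -1 else 1

/-- The coefficients `ξ_{ijk} = tr(F_i F_j F_k)`. -/
noncomputable def xiCoef {d : ℕ} (F : Fin (d ^ 2) → Mat d) (i j k : Fin (d ^ 2)) : ℂ :=
  (F i * F j * F k).trace

/-- The geometric tensor `Ω_{μν}^{jk} = Σ_i θ_i ξ_{ijμ} conj(ξ_{ikν})`. -/
noncomputable def Omega {d : ℕ} (F : Fin (d ^ 2) → Mat d)
    (μ ν j k : Fin (d ^ 2)) : ℂ :=
  ∑ i : Fin (d ^ 2), thetaCoef d i * xiCoef F i j μ * conj (xiCoef F i k ν)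

/-- Embedding of the first `d²-1` indices into `Fin (d²)`. -/
def embIdx (d : ℕ) (μ : Fin (d ^ 2 - 1)) : Fin (d ^ 2) := Fin.castLE (Nat.sub_le _ _) μ

/-- The Lindblad-like form `ρ ↦ −i[H,ρ] + Σ_{μ,ν<d²} c_{μν}(F_μ ρ F_ν − ½{F_ν F_μ, ρ})`. -/
noncomputable def gksForm {d : ℕ} (F : Fin (d ^ 2) → Mat d) (H : Mat d)
    (c : Matrix (Fin (d ^ 2 - 1)) (Fin (d ^ 2 - 1)) ℂ) (ρ : Mat d) : Mat d :=
  (-Complex.I) • (H * ρ - ρ * H) +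
    ∑ μ : Fin (d ^ 2 - 1), ∑ ν : Fin (d ^ 2 - 1),
      c μ ν • (F (embIdx d μ) * ρ * F (embIdx d ν) -
        (2⁻¹ : ℂ) • (F (embIdx d ν) * F (embIdx d μ) * ρ +
          ρ * (F (embIdx d ν) * F (embIdx d μ))))

/-- D-divisibility of a family of maps in `[t₁,t₂]`: the propagator `V_{t,s} = X_{t,s} + θ∘Y_{t,s}`
is trace preserving and decomposable, with CP parts `X`, `Y` continuous in `(t,s)`. -/
def IsDDivisible {d : ℕ} (Λ : ℝ → MatMap d) (t₁ t₂ : ℝ) : Prop :=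
  ∃ X Y : ℝ → ℝ → MatMap d,
    (∀ t ∈ Icc t₁ t₂, ∀ s ∈ Icc t₁ t,
      IsCP (X t s) ∧ IsCP (Y t s) ∧
      IsTP (X t s + transposeMap d ∘ₗ Y t s) ∧
      Λ t = (X t s + transposeMap d ∘ₗ Y t s) ∘ₗ Λ s) ∧
    (∀ a : Mat d, ContinuousOn (fun p : ℝ × ℝ => X p.1 p.2 a)
      {p : ℝ × ℝ | p.1 ∈ Icc t₁ t₂ ∧ p.2 ∈ Icc t₁ p.1}) ∧
    (∀ a : Mat d, ContinuousOn (fun p : ℝ × ℝ => Y p.1 p.2 a)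
      {p : ℝ × ℝ | p.1 ∈ Icc t₁ t₂ ∧ p.2 ∈ Icc t₁ p.1})

/-- The exponential of a linear map on `M_d(ℂ)`, computed through its matrix
representation in the standard basis. -/
noncomputable def endExp {d : ℕ} (f : MatMap d) : MatMap d :=
  (LinearMap.toMatrix (Matrix.stdBasis ℂ (Fin d) (Fin d))
      (Matrix.stdBasis ℂ (Fin d) (Fin d))).symm
    (NormedSpace.exp
      (LinearMap.toMatrix (Matrix.stdBasis ℂ (Fin d) (Fin d))
        (Matrix.stdBasis ℂ (Fin d) (Fin d)) f))

/-- `φ'` is the trace-dual of `φ`: `tr(a φ(b)) = tr(φ'(a) b)` for all `a`, `b`. -/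
def IsTraceDual {d : ℕ} (φ φ' : MatMap d) : Prop :=
  ∀ a b : Mat d, (a * φ b).trace = (φ' a * b).trace

/-- Positive map: maps positive semidefinite matrices to positive semidefinite matrices. -/
def IsPosMap {d : ℕ} (φ : MatMap d) : Prop :=
  ∀ a : Mat d, a.PosSemidef → (φ a).PosSemidef

/-- Squared Hilbert–Schmidt norm `‖a‖²_HS = tr(a†a)` (a real number). -/
noncomputable def hsNormSq {d : ℕ} (a : Mat d) : ℝ := ((aᴴ * a).trace).re


section AuxChoiBound

open Finset in
private lemma aux_wolkowicz {ι : Type*} [Fintype ι] [DecidableEq ι] (x : ι → ℝ)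
    (hzero : ∑ i, x i = 0) (p : ι) :
    (x p) ^ 2 * (Fintype.card ι : ℝ) ≤ ((Fintype.card ι : ℝ) - 1) * ∑ i, (x i) ^ 2 := by
  have h1 : ∑ i ∈ Finset.univ.erase p, x i = -(x p) := by
    rw [Finset.sum_erase_eq_sub (Finset.mem_univ p), hzero]; ring
  have h2 : ((Finset.univ.erase p).card : ℝ) = (Fintype.card ι : ℝ) - 1 := by
    rw [Finset.card_erase_of_mem (Finset.mem_univ p), Finset.card_univ]
    have : 1 ≤ Fintype.card ι := Fintype.card_pos_iff.mpr ⟨p⟩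
    push_cast [Nat.cast_sub this]
    ring
  have h4 : ∑ i ∈ Finset.univ.erase p, (x i) ^ 2 = (∑ i, (x i) ^ 2) - (x p) ^ 2 :=
    Finset.sum_erase_eq_sub (Finset.mem_univ p)
  have h3 := sq_sum_le_card_mul_sum_sq (s := Finset.univ.erase p) (f := x)
  rw [h1, h4, h2] at h3
  nlinarith [h3]

private lemma aux_herm_trace_eq {n : Type*} [Fintype n] [DecidableEq n] {A : Matrix n n ℂ}
    (hA : A.IsHermitian) : A.trace = ∑ i, (hA.eigenvalues i : ℂ) := by
  conv_lhs => rw [hA.spectral_theorem, Unitary.conjStarAlgAut_apply]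
  rw [Matrix.trace_mul_cycle, Unitary.coe_star_mul_self, one_mul, Matrix.trace_diagonal]
  simp

private lemma aux_herm_trace_sq_eq {n : Type*} [Fintype n] [DecidableEq n] {A : Matrix n n ℂ}
    (hA : A.IsHermitian) : (A * A).trace = ∑ i, ((hA.eigenvalues i : ℂ)) ^ 2 := by
  conv_lhs => rw [hA.spectral_theorem, Unitary.conjStarAlgAut_apply]
  simp only [Matrix.mul_assoc]
  rw [← Matrix.mul_assoc (star (hA.eigenvectorUnitary : Matrix n n ℂ))
    (hA.eigenvectorUnitary : Matrix n n ℂ), Unitary.coe_star_mul_self, one_mul,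
    Matrix.trace_mul_comm]
  simp only [Matrix.mul_assoc]
  rw [Unitary.coe_star_mul_self, mul_one, Matrix.diagonal_mul_diagonal, Matrix.trace_diagonal]
  simp [sq]

private lemma aux_choi_trace {d : ℕ} (φ : MatMap d) (htp : IsTP φ) :
    (choiMatrix φ).trace = (d : ℂ) := by
  simp only [Matrix.trace, Matrix.diag, Fintype.sum_prod_type]
  have : ∀ i : Fin d, ∑ a : Fin d, (choiMatrix φ) (i, a) (i, a)
      = (φ (Matrix.single i i 1)).trace := by
    intro i; rw [Matrix.trace]; rfl
  rw [Finset.sum_congr rfl fun i _ => this i]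
  simp [htp _, Matrix.trace_single_eq_same]

private lemma aux_hsNormSq_eq {d : ℕ} (a : Mat d) :
    hsNormSq a = ∑ x : Fin d, ∑ y : Fin d, (a x y * (starRingEnd ℂ) (a x y)).re := by
  unfold hsNormSq
  simp only [Matrix.trace, Matrix.diag, Matrix.mul_apply, Matrix.conjTranspose_apply,
    Complex.re_sum]
  rw [Finset.sum_comm]
  simp [mul_comm]

private lemma aux_choi_trace_sq {d : ℕ} (φ : MatMap d) (hherm : (choiMatrix φ).IsHermitian) :
    ((choiMatrix φ * choiMatrix φ).trace).re
      = ∑ i : Fin d, ∑ j : Fin d, hsNormSq (φ (Matrix.single i j 1)) := by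
  have hC : ∀ p q, (choiMatrix φ) q p = starRingEnd ℂ ((choiMatrix φ) p q) := by
    intro p q
    have := congrFun (congrFun hherm q) p
    simpa [Matrix.conjTranspose_apply] using this.symm
  have h1 : (choiMatrix φ * choiMatrix φ).trace
      = ∑ p : Fin d × Fin d, ∑ q : Fin d × Fin d,
        (choiMatrix φ) p q * starRingEnd ℂ ((choiMatrix φ) p q) := by
    simp only [Matrix.trace, Matrix.diag, Matrix.mul_apply]
    exact Finset.sum_congr rfl fun p _ => Finset.sum_congr rfl fun q _ => by rw [hC p q]
  rw [h1]
  simp only [Fintype.sum_prod_type, Complex.re_sum]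
  refine Finset.sum_congr rfl fun i _ => ?_
  rw [Finset.sum_comm]
  refine Finset.sum_congr rfl fun j _ => ?_
  rw [aux_hsNormSq_eq]
  rfl

end AuxChoiBound

/-- The Wolkowicz–Styan lower bound for the smallest eigenvalue of the Choi matrix of a
trace preserving, Hermiticity preserving map:
`λ_min(C_φ) ≥ (1/d)(1 − √((d²−1)(Σ_{i,j}‖φ(E_{ij})‖²_HS − 1)))`. -/
theorem choi_eigenvalues_lower_bound {d : ℕ} (φ : MatMap d) (htp : IsTP φ) (hhp : IsHP φ)
    (hherm : (choiMatrix φ).IsHermitian) :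
    ∀ p : Fin d × Fin d,
      (1 / (d : ℝ)) * (1 - Real.sqrt (((d : ℝ) ^ 2 - 1) *
        ((∑ i : Fin d, ∑ j : Fin d, hsNormSq (φ (Matrix.single i j 1))) - 1))) ≤
      hherm.eigenvalues p := by
  intro p
  rcases Nat.eq_zero_or_pos d with hd | hd
  · exact absurd p.1.isLt (by omega)
  have hdR : (0:ℝ) < d := by exact_mod_cast hd
  have hd1 : (1:ℝ) ≤ d := by exact_mod_cast hd
  set T : ℝ := ∑ i : Fin d, ∑ j : Fin d, hsNormSq (φ (Matrix.single i j 1)) with hT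
  have hsum : ∑ q, hherm.eigenvalues q = (d : ℝ) := by
    have h := (aux_herm_trace_eq hherm).symm.trans (aux_choi_trace φ htp)
    exact_mod_cast h
  have hsumsq : ∑ q, (hherm.eigenvalues q) ^ 2 = T := by
    have h := congrArg Complex.re (aux_herm_trace_sq_eq hherm)
    rw [aux_choi_trace_sq φ hherm, ← hT] at h
    rw [h, Complex.re_sum]
    simp [← Complex.ofReal_pow]
  set x : Fin d × Fin d → ℝ := fun q => hherm.eigenvalues q - 1 / d with hx
  have hcard : (Fintype.card (Fin d × Fin d) : ℝ) = (d:ℝ) ^ 2 := by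
    simp [Fintype.card_prod, sq]
  have hzero : ∑ q, x q = 0 := by
    simp only [hx, Finset.sum_sub_distrib, hsum, Finset.sum_const, Finset.card_univ,
      nsmul_eq_mul, Fintype.card_prod, Fintype.card_fin]
    push_cast
    field_simp
    ring
  have hsumsqx : ∑ q, x q ^ 2 = T - 1 := by
    have he : ∀ q, x q ^ 2
        = (hherm.eigenvalues q) ^ 2 - 2 * (1/d) * hherm.eigenvalues q + (1/d) ^ 2 := by
      intro q; simp only [hx]; ring
    rw [Finset.sum_congr rfl fun q _ => he q, Finset.sum_add_distrib, Finset.sum_sub_distrib,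
      hsumsq, ← Finset.mul_sum, hsum, Finset.sum_const, Finset.card_univ, nsmul_eq_mul,
      Fintype.card_prod, Fintype.card_fin]
    push_cast
    field_simp
    ring
  have hkey := aux_wolkowicz x hzero p
  rw [hsumsqx, hcard] at hkey
  have hT1 : (0:ℝ) ≤ T - 1 := by rw [← hsumsqx]; positivity
  have hA : (0:ℝ) ≤ ((d:ℝ) ^ 2 - 1) * (T - 1) := mul_nonneg (by nlinarith) hT1
  have h5 : (x p) ^ 2 ≤ ((d:ℝ) ^ 2 - 1) * (T - 1) / (d:ℝ) ^ 2 := by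
    rw [le_div_iff₀ (by positivity)]; exact hkey
  have h6 : -(x p) ≤ Real.sqrt (((d:ℝ) ^ 2 - 1) * (T - 1)) / d := by
    calc -(x p) ≤ |x p| := neg_le_abs _
      _ = Real.sqrt ((x p) ^ 2) := (Real.sqrt_sq_eq_abs _).symm
      _ ≤ Real.sqrt (((d:ℝ) ^ 2 - 1) * (T - 1) / (d:ℝ) ^ 2) := Real.sqrt_le_sqrt h5
      _ = Real.sqrt (((d:ℝ) ^ 2 - 1) * (T - 1)) / d := by
          rw [Real.sqrt_div hA, Real.sqrt_sq hdR.le]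
  have hxp : -(x p) = 1 / (d:ℝ) - hherm.eigenvalues p := by simp only [hx]; ring
  rw [hxp] at h6
  have hring : (1 / (d:ℝ)) * (1 - Real.sqrt (((d:ℝ) ^ 2 - 1) * (T - 1)))
      = 1 / (d:ℝ) - Real.sqrt (((d:ℝ) ^ 2 - 1) * (T - 1)) / d := by ring
  rw [hring]
  linarith
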